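/- Let Q and Q' be monomial primary ideals of S = K[x_1,…,x_n] with √Q = (x_1,…,x_t) and √Q' = (x_{r+1},…,x_n), where 1 < r ≤ t < n. Then sdepth(Q ∩ Q') ≤ min{ n − ⌊t/2⌋, n − ⌊(n−t)/2⌋ }. -/

import Mathlib

open MvPolynomial

variable {K : Type*} [Field K]

/-- The Stanley space `u·K[Z]`: the `K`-linear span of all `u * v` where `v` is a
monomial in the variables of `Z`. -/
noncomputable def stanleySpace {n : ℕ} (u : MvPolynomial (Fin n) K) (Z : Finset (Fin n)) :
    Submodule K (MvPolynomial (Fin n) K) :=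
  Submodule.span K { w | ∃ d : Fin n →₀ ℕ, ↑d.support ⊆ (Z : Set (Fin n)) ∧
    w = u * MvPolynomial.monomial d 1 }

/-- `u` is a monomial. -/
def IsMonomial {n : ℕ} (u : MvPolynomial (Fin n) K) : Prop :=
  ∃ d : Fin n →₀ ℕ, u = MvPolynomial.monomial d 1

/-- A monomial ideal: an ideal generated by monomials. -/
def IsMonomialIdeal {n : ℕ} (I : Ideal (MvPolynomial (Fin n) K)) : Prop :=
  ∃ G : Set (MvPolynomial (Fin n) K), (∀ u ∈ G, IsMonomial u) ∧ I = Ideal.span G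

/-- `(u i, Z i)` is a Stanley decomposition of the ideal `I`:
`I = ⊕ᵢ uᵢ K[Zᵢ]` as `K`-vector spaces, with each `uᵢ` a monomial. -/
def IsStanleyDecomp {n : ℕ} (I : Ideal (MvPolynomial (Fin n) K)) {s : ℕ}
    (u : Fin s → MvPolynomial (Fin n) K) (Z : Fin s → Finset (Fin n)) : Prop :=
  (∀ i, IsMonomial (u i)) ∧
  iSupIndep (fun i => stanleySpace (u i) (Z i)) ∧
  (⨆ i, stanleySpace (u i) (Z i)) = Submodule.restrictScalars K I

/-- The Stanley depth of a monomial ideal: the largest `k` such that there is a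
Stanley decomposition all of whose Stanley spaces have dimension at least `k`. -/
noncomputable def sdepth {n : ℕ} (I : Ideal (MvPolynomial (Fin n) K)) : ℕ :=
  sSup { k | ∃ (s : ℕ) (u : Fin s → MvPolynomial (Fin n) K) (Z : Fin s → Finset (Fin n)),
    IsStanleyDecomp I u Z ∧ ∀ i, k ≤ (Z i).card }

/-!
If `v ∉ I` is a monomial with `v·xₐ ∈ I` for every `a ∈ A`, then in a Stanley decomposition of
`I` each `v·xₐ` lies in some Stanley space `uₐK[Zₐ]`. If `c ∈ Zₐ` and `a ∈ Z_c` for `a ≠ c`, the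
monomial `v·xₐ·x_c` lies in both spaces, so they coincide, and then `v` lies in that space too,
which is absurd. Hence `c ∈ Zₐ` is an asymmetric relation on `A`, and counting its pairs gives
`|A|·k ≤ |A|(|A| - 1)/2 + |A|(n - |A| + 1)`, i.e. `2k + |A| ≤ 2n + 1` when all `|Zᵢ| ≥ k`.

For `Q ∩ Q'` such a `v` exists for `A = {x₁, …, x_t}`: multiply a socle monomial of `Q` over these
variables by a power of `x_{t+1} ∈ √Q' \ √Q`, which keeps it outside the primary ideal `Q`.
Exchanging the roles of `Q` and `Q'` gives `A = {x_{t+1}, …, xₙ}`.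
-/

open Finset

theorem two_mul_add_card_le_of_asymm {σ : Type*} [Fintype σ] [DecidableEq σ]
    {A : Finset σ} (hA : A.Nonempty) {k : ℕ} (Z : σ → Finset σ) (hk : ∀ a ∈ A, k ≤ #(Z a))
    (hasymm : ∀ a ∈ A, ∀ c ∈ A, a ≠ c → c ∈ Z a → a ∉ Z c) :
    2 * k + #A ≤ 2 * Fintype.card σ + 1 := by
  set R : σ → σ → Prop := fun a c => a ≠ c ∧ c ∈ Z a
  set m := #A
  set P := ∑ a ∈ A, #{c ∈ A | R a c}
  have hfiber : ∀ a ∈ A, k ≤ #{c ∈ A | R a c} + 1 + (Fintype.card σ - m) := by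
    intro a ha
    have hsub : Z a ⊆ ({c ∈ A | R a c} ∪ {a}) ∪ Aᶜ := by
      intro c hc
      by_cases hcA : c ∈ A
      · by_cases hac : a = c
        · simp [hac]
        · simp [R, hcA, hac, hc]
      · simp [hcA]
    calc k ≤ #(Z a) := hk a ha
      _ ≤ #(({c ∈ A | R a c} ∪ {a}) ∪ Aᶜ) := card_le_card hsub
      _ ≤ #{c ∈ A | R a c} + 1 + (Fintype.card σ - m) := by
        grw [card_union_le, card_union_le, card_singleton, card_compl]
  have hpairs : 2 * P ≤ m * (m - 1) := by
    have hpt : ∀ a ∈ A, ∀ c ∈ A,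
        (if R a c then 1 else 0) + (if R c a then 1 else 0) ≤ if a ≠ c then 1 else 0 := by
      intro a ha c hc
      by_cases hac : a = c
      · simp [R, hac]
      · have := hasymm a ha c hc hac
        simp only [R]
        split_ifs <;> simp_all
    calc 2 * P = ∑ a ∈ A, ∑ c ∈ A, ((if R a c then 1 else 0) + (if R c a then 1 else 0)) := by
          simp only [P, card_filter, sum_add_distrib, two_mul]
          rw [sum_comm (f := fun a c => if R c a then 1 else 0)]
      _ ≤ ∑ a ∈ A, ∑ c ∈ A, if a ≠ c then 1 else 0 :=
          sum_le_sum fun a ha => sum_le_sum fun c hc => hpt a ha c hc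
      _ = m * (m - 1) := by
          simp only [← card_filter, filter_ne]
          rw [sum_congr rfl fun a ha => card_erase_of_mem ha, sum_const, smul_eq_mul]
  have hsum : m * k ≤ P + m * (1 + (Fintype.card σ - m)) := by
    calc m * k = ∑ _a ∈ A, k := by rw [sum_const, smul_eq_mul]
      _ ≤ ∑ a ∈ A, (#{c ∈ A | R a c} + (1 + (Fintype.card σ - m))) :=
        sum_le_sum fun a ha => by have := hfiber a ha; omega
      _ = P + m * (1 + (Fintype.card σ - m)) := by rw [sum_add_distrib, sum_const, smul_eq_mul]
  have hm : 0 < m := hA.card_pos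
  have hmn : m ≤ Fintype.card σ := card_le_univ A
  refine Nat.le_of_mul_le_mul_left ?_ hm
  zify [hmn, Nat.one_le_iff_ne_zero.2 hm.ne'] at hsum hpairs ⊢
  nlinarith

section StanleyCone

variable {σ : Type*}

def stanleyCone (u : σ →₀ ℕ) (Z : Finset σ) : Set (σ →₀ ℕ) :=
  {d | u ≤ d ∧ ∀ x ∉ Z, d x = u x}

theorem add_mem_stanleyCone_iff {u e : σ →₀ ℕ} {Z : Finset σ} :
    u + e ∈ stanleyCone u Z ↔ ↑e.support ⊆ (Z : Set σ) := by
  simp only [stanleyCone, Set.mem_ofPred_eq, le_add_iff_nonneg_right, zero_le, true_and,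
    Finsupp.add_apply, add_eq_left, Set.subset_def, Finset.mem_coe, Finsupp.mem_support_iff]
  exact ⟨fun h x hx => by_contra fun hxZ => hx (h x hxZ),
    fun h x hxZ => by_contra fun hx => hxZ (h x hx)⟩

theorem mem_stanleyCone_iff {u d : σ →₀ ℕ} {Z : Finset σ} :
    d ∈ stanleyCone u Z ↔ ∃ e : σ →₀ ℕ, ↑e.support ⊆ (Z : Set σ) ∧ d = u + e := by
  constructor
  · intro hd
    refine ⟨d - u, ?_, (add_tsub_cancel_of_le hd.1).symm⟩
    rw [← add_mem_stanleyCone_iff, add_tsub_cancel_of_le hd.1]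
    exact hd
  · rintro ⟨e, he, rfl⟩
    exact add_mem_stanleyCone_iff.2 he

theorem add_single_mem_stanleyCone {u d : σ →₀ ℕ} {Z : Finset σ} {c : σ}
    (hd : d ∈ stanleyCone u Z) (hc : c ∈ Z) : d + Finsupp.single c 1 ∈ stanleyCone u Z := by
  refine ⟨hd.1.trans le_self_add, fun x hx => ?_⟩
  rw [Finsupp.add_apply, Finsupp.single_eq_of_ne (by rintro rfl; exact hx hc), add_zero]
  exact hd.2 x hx

theorem mem_stanleyCone_of_add_single_mem [DecidableEq σ] {u v : σ →₀ ℕ} {Z : Finset σ}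
    {a c : σ} (hac : a ≠ c) (ha : v + Finsupp.single a 1 ∈ stanleyCone u Z)
    (hc : v + Finsupp.single c 1 ∈ stanleyCone u Z) : v ∈ stanleyCone u Z := by
  refine ⟨fun x => ?_, fun x hx => ?_⟩
  · have h1 := ha.1 x
    have h2 := hc.1 x
    simp only [Finsupp.add_apply, Finsupp.single_apply] at h1 h2
    split_ifs at h1 h2 with hax hcx
    · exact absurd (hax.trans hcx.symm) hac
    all_goals omega
  · have h1 := ha.2 x hx
    have h2 := hc.2 x hx
    simp only [Finsupp.add_apply, Finsupp.single_apply] at h1 h2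
    split_ifs at h1 h2 with hax hcx
    · exact absurd (hax.trans hcx.symm) hac
    all_goals omega


end StanleyCone

section StanleyDecomp

variable {n : ℕ}

theorem stanleySpace_monomial (u : Fin n →₀ ℕ) (Z : Finset (Fin n)) :
    stanleySpace (monomial u (1 : K)) Z = restrictSupport K (stanleyCone u Z) := by
  rw [stanleySpace, restrictSupport_eq_span]
  congr 1
  ext w
  simp only [Set.mem_ofPred_eq, Set.mem_image, mem_stanleyCone_iff, monomial_mul, one_mul]
  constructor
  · rintro ⟨e, he, rfl⟩
    exact ⟨u + e, ⟨e, he, rfl⟩, rfl⟩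
  · rintro ⟨_, ⟨e, he, rfl⟩, rfl⟩
    exact ⟨e, he, rfl⟩

variable {I : Ideal (MvPolynomial (Fin n) K)} {s : ℕ} {u : Fin s → Fin n →₀ ℕ}
  {Z : Fin s → Finset (Fin n)}

theorem IsStanleyDecomp.monomial_mem_iff
    (hdec : IsStanleyDecomp I (fun i => monomial (u i) 1) Z) {d : Fin n →₀ ℕ} :
    monomial d (1 : K) ∈ I ↔ ∃ i, d ∈ stanleyCone (u i) (Z i) := by
  have hsup := hdec.2.2
  simp only [stanleySpace_monomial] at hsup
  rw [← Submodule.restrictScalars_mem K, ← hsup]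
  constructor
  · intro hd
    have hle : ⨆ i, restrictSupport K (stanleyCone (u i) (Z i)) ≤
        restrictSupport K (⋃ i, stanleyCone (u i) (Z i)) :=
      iSup_le fun i =>
        restrictSupport_mono K (Set.subset_iUnion (fun i => stanleyCone (u i) (Z i)) i)
    simpa using hle hd
  · rintro ⟨i, hi⟩
    exact Submodule.mem_iSup_of_mem i ((monomial_mem_restrictSupport K).2 (Or.inl hi))

theorem IsStanleyDecomp.eq_of_mem_stanleyCone
    (hdec : IsStanleyDecomp I (fun i => monomial (u i) 1) Z) {d : Fin n →₀ ℕ} {i j : Fin s}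
    (hi : d ∈ stanleyCone (u i) (Z i)) (hj : d ∈ stanleyCone (u j) (Z j)) : i = j := by
  by_contra hij
  have hdisj := hdec.2.1.pairwiseDisjoint hij
  simp only [Function.onFun, stanleySpace_monomial] at hdisj
  have := Submodule.disjoint_def.1 hdisj (monomial d (1 : K))
    ((monomial_mem_restrictSupport K).2 (Or.inl hi))
    ((monomial_mem_restrictSupport K).2 (Or.inl hj))
  exact one_ne_zero (monomial_eq_zero.1 this)

end StanleyDecomp

section StanleyDepth

variable {n : ℕ} {I : Ideal (MvPolynomial (Fin n) K)} {A : Finset (Fin n)} {v : Fin n →₀ ℕ}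

theorem two_mul_add_card_le_of_isStanleyDecomp {s k : ℕ} {u : Fin s → MvPolynomial (Fin n) K}
    {Z : Fin s → Finset (Fin n)} (hdec : IsStanleyDecomp I u Z) (hk : ∀ i, k ≤ #(Z i))
    (hA : A.Nonempty) (hv : monomial v (1 : K) ∉ I)
    (hvA : ∀ a ∈ A, monomial (v + Finsupp.single a 1) (1 : K) ∈ I) :
    2 * k + #A ≤ 2 * n + 1 := by
  choose ud hud using hdec.1
  obtain rfl : u = fun i => monomial (ud i) 1 := funext hud
  have hcone : ∀ a ∈ A, ∃ i, v + Finsupp.single a 1 ∈ stanleyCone (ud i) (Z i) :=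
    fun a ha => hdec.monomial_mem_iff.1 (hvA a ha)
  obtain ⟨i₀, -⟩ := hcone _ hA.choose_spec
  have : Nonempty (Fin s) := ⟨i₀⟩
  choose! idx hidx using hcone
  have hasymm : ∀ a ∈ A, ∀ c ∈ A, a ≠ c → c ∈ Z (idx a) → a ∉ Z (idx c) := by
    intro a ha c hc hac hcZ haZ
    have hmem_a := add_single_mem_stanleyCone (hidx a ha) hcZ
    have hmem_c := add_single_mem_stanleyCone (hidx c hc) haZ
    rw [add_right_comm] at hmem_c
    have hidx_eq : idx a = idx c := hdec.eq_of_mem_stanleyCone hmem_a hmem_c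
    refine hv (hdec.monomial_mem_iff.2 ⟨idx a, ?_⟩)
    exact mem_stanleyCone_of_add_single_mem hac (hidx a ha) (hidx_eq ▸ hidx c hc)
  simpa using two_mul_add_card_le_of_asymm hA (fun a => Z (idx a)) (fun a _ => hk _) hasymm

theorem two_mul_sdepth_add_card_le (hA : A.Nonempty) (hv : monomial v (1 : K) ∉ I)
    (hvA : ∀ a ∈ A, monomial (v + Finsupp.single a 1) (1 : K) ∈ I) :
    2 * sdepth I + #A ≤ 2 * n + 1 := by
  have hAn : #A ≤ n := by simpa using card_le_univ A
  have : sdepth I ≤ (2 * n + 1 - #A) / 2 := by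
    refine csSup_le' ?_
    rintro k ⟨s, u, Z, hdec, hk⟩
    have := two_mul_add_card_le_of_isStanleyDecomp hdec hk hA hv hvA
    omega
  omega

end StanleyDepth

section Socle

variable {σ R : Type*} [CommSemiring R] {J J' : Ideal (MvPolynomial σ R)}

theorem exists_monomial_add_single_notMem_succ_mem {w : σ →₀ ℕ} {b : σ}
    (hw : monomial w (1 : R) ∉ J) (hb : X b ∈ J.radical) :
    ∃ j, monomial (w + Finsupp.single b j) (1 : R) ∉ J ∧
      monomial (w + Finsupp.single b (j + 1)) (1 : R) ∈ J := by
  classical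
  obtain ⟨m, hm⟩ := hb
  have hex : ∃ j, monomial (w + Finsupp.single b j) (1 : R) ∈ J :=
    ⟨m, by rw [monomial_add_single]; exact J.mul_mem_left _ hm⟩
  have hpos : Nat.find hex ≠ 0 := fun h0 => hw (by simpa [h0] using Nat.find_spec hex)
  refine ⟨Nat.find hex - 1, Nat.find_min hex (by omega), ?_⟩
  rw [Nat.sub_add_cancel (Nat.one_le_iff_ne_zero.2 hpos)]
  exact Nat.find_spec hex

theorem exists_monomial_socle (A : Finset σ) (hJ : J ≠ ⊤) (hA : ∀ a ∈ A, X a ∈ J.radical) :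
    ∃ w, monomial w (1 : R) ∉ J ∧ ∀ a ∈ A, monomial (w + Finsupp.single a 1) (1 : R) ∈ J := by
  classical
  induction A using Finset.induction_on with
  | empty => exact ⟨0, by simpa using (Ideal.ne_top_iff_one J).1 hJ, by simp⟩
  | insert b A _ ih =>
    obtain ⟨w, hw, hwA⟩ := ih fun a ha => hA a (Finset.mem_insert_of_mem ha)
    obtain ⟨j, hj, hj1⟩ :=
      exists_monomial_add_single_notMem_succ_mem hw (hA b (Finset.mem_insert_self b A))
    refine ⟨w + Finsupp.single b j, hj, ?_⟩
    rintro a ha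
    rcases Finset.mem_insert.1 ha with rfl | ha
    · rwa [add_assoc, ← Finsupp.single_add]
    · rw [add_right_comm, monomial_add_single]
      exact J.mul_mem_right _ (hwA a ha)

theorem exists_monomial_socle_inf (A : Finset σ) {b : σ} (hJ : J.IsPrimary)
    (hA : ∀ a ∈ A, X a ∈ J.radical) (hbJ : X b ∉ J.radical) (hbJ' : X b ∈ J'.radical) :
    ∃ v, monomial v (1 : R) ∉ J ⊓ J' ∧
      ∀ a ∈ A, monomial (v + Finsupp.single a 1) (1 : R) ∈ J ⊓ J' := by
  obtain ⟨hJtop, hJprim⟩ := Ideal.isPrimary_iff.1 hJ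
  obtain ⟨w, hw, hwA⟩ := exists_monomial_socle A hJtop hA
  obtain ⟨m, hm⟩ := hbJ'
  refine ⟨w + Finsupp.single b m, fun hv => ?_, fun a ha => ?_⟩
  · rw [monomial_add_single] at hv
    rcases hJprim hv.1 with hwJ | hbm
    · exact hw hwJ
    · exact hbJ ((Ideal.isPrime_radical hJ).mem_of_pow_mem m hbm)
  · rw [add_right_comm, monomial_add_single]
    exact ⟨J.mul_mem_right _ (hwA a ha), J'.mul_mem_left _ hm⟩

end Socle

theorem X_mem_span_X_image_iff {σ R : Type*} [CommSemiring R] [Nontrivial R] {s : Set σ} {i : σ} :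
    X i ∈ Ideal.span (X '' s : Set (MvPolynomial σ R)) ↔ i ∈ s := by
  classical
  simp [mem_ideal_span_X_image, support_X, Finsupp.single_apply]

theorem sdepth_inter_le_min_general {n t r : ℕ} (hr : 1 < r) (hrt : r ≤ t) (htn : t < n)
    (Q Q' : Ideal (MvPolynomial (Fin n) K))
    (hQp : Q.IsPrimary) (hQ'p : Q'.IsPrimary)
    (hQr : Q.radical =
      Ideal.span ((fun i => (X i : MvPolynomial (Fin n) K)) '' {i | (i : ℕ) < t}))
    (hQ'r : Q'.radical =
      Ideal.span ((fun i => (X i : MvPolynomial (Fin n) K)) '' {i | r ≤ (i : ℕ)})) :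
    sdepth (Q ⊓ Q') ≤ min (n - t / 2) (n - (n - t) / 2) := by
  have hXQ : ∀ i, X i ∈ Q.radical ↔ (i : ℕ) < t := fun i => by
    rw [hQr]; exact X_mem_span_X_image_iff
  have hXQ' : ∀ i, X i ∈ Q'.radical ↔ r ≤ (i : ℕ) := fun i => by
    rw [hQ'r]; exact X_mem_span_X_image_iff
  let A : Finset (Fin n) := {i | (i : ℕ) < t}
  have hA : #A = t := by simp [A, Fin.card_filter_val_lt, htn.le]
  have hAc : #Aᶜ = n - t := by rw [card_compl, Fintype.card_fin, hA]
  let i₀ : Fin n := ⟨0, by omega⟩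
  let iₜ : Fin n := ⟨t, htn⟩
  obtain ⟨v, hv, hvA⟩ := exists_monomial_socle_inf A (J' := Q') (b := iₜ) hQp
    (fun a ha => (hXQ a).2 (by simpa [A] using ha)) (by simp [hXQ, iₜ]) (by simp [hXQ', iₜ, hrt])
  obtain ⟨v', hv', hv'A⟩ := exists_monomial_socle_inf Aᶜ (J' := Q) (b := i₀) hQ'p
    (fun a ha => (hXQ' a).2 (hrt.trans (by simpa [A] using ha))) (by simp [hXQ', i₀]; omega)
    (by simp [hXQ, i₀]; omega)
  rw [inf_comm] at hv' hv'A
  have h₁ := two_mul_sdepth_add_card_le ⟨i₀, by simp [A, i₀]; omega⟩ hv hvA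
  have h₂ := two_mul_sdepth_add_card_le ⟨iₜ, by simp [A, iₜ]⟩ hv' hv'A
  rw [hA] at h₁
  rw [hAc] at h₂
  omega

/-- If `Q, Q'` are monomial primary ideals with `√Q = (x_1,…,x_t)` and
`√Q' = (x_{r+1},…,x_n)`, `1 < r ≤ t < n`, then
`sdepth(Q ∩ Q') ≤ min{n − ⌊t/2⌋, n − ⌊(n−t)/2⌋}`. -/
theorem sdepth_inter_le_min {n t r : ℕ} (hr : 1 < r) (hrt : r ≤ t) (htn : t < n)
    (Q Q' : Ideal (MvPolynomial (Fin n) K))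
    (hQm : IsMonomialIdeal Q) (hQ'm : IsMonomialIdeal Q')
    (hQp : Q.IsPrimary) (hQ'p : Q'.IsPrimary)
    (hQr : Q.radical =
      Ideal.span ((fun i => (X i : MvPolynomial (Fin n) K)) '' {i | (i : ℕ) < t}))
    (hQ'r : Q'.radical =
      Ideal.span ((fun i => (X i : MvPolynomial (Fin n) K)) '' {i | r ≤ (i : ℕ)})) :
    sdepth (Q ⊓ Q') ≤ min (n - t / 2) (n - (n - t) / 2) :=
  sdepth_inter_le_min_general hr hrt htn Q Q' hQp hQ'p hQr hQ'r
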